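/- Let ū = 1 and π(S) = min_{i∈\bar S}(1 − p_i^0) with π(I\{0}) = 1. Fix an assortment S* ⊆ I\{0} and j ∈ S*, and suppose g(S*, j) ≤ λ for some λ ∈ ℝ. Then for every subassortment S ⊆ S* with j ∈ S, we also have g(S, j) ≤ λ; equivalently, removing j is (weakly) beneficial for every subassortment of S* containing j. (The proof splits into the three cases p_j^0 ≤ p_t^0 ≤ p_ℓ^0, p_t^0 ≤ p_j^0 ≤ p_ℓ^0, and p_t^0 ≤ p_ℓ^0 ≤ p_j^0, where 1 − p_ℓ^0 = π(S) and 1 − p_t^0 = π(S*).) -/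

import Mathlib

/-!
Write `c = 1 - p j`. Since `π` is a minimum over the complement, `π (S.erase j) = min (π S) c`,
so `ν j * g S j = w * min a c + W * (a - min a c)` with `w = ν j * r j`, `a = π S` and
`W = ∑ i ∈ S, ν i * r i`. This expression is monotone in `a` (its slope is `w` below `c` and
`W` above it) and in `W` (its coefficient `(a - c)⁺` is nonnegative), and passing from `S` to
`S*` can only increase both `a` and `W`.
-/

open Finset

structure IsComplMin {ι : Type*} [Fintype ι] [DecidableEq ι] (p : ι → ℝ) (π : Finset ι → ℝ) :
    Prop where
  univ_eq : π univ = 1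
  eq_sInf : ∀ S : Finset ι, S ≠ univ → π S = sInf {x : ℝ | ∃ i ∈ Sᶜ, x = 1 - p i}

namespace IsComplMin

variable {ι : Type*} [Fintype ι] [DecidableEq ι] {p : ι → ℝ} {π : Finset ι → ℝ}

lemma eq_inf' (hπ : IsComplMin p π) {S : Finset ι} (hS : Sᶜ.Nonempty) :
    π S = Sᶜ.inf' hS (fun i => 1 - p i) := by
  have hSne : S ≠ univ := by simpa [← compl_eq_empty_iff, ← nonempty_iff_ne_empty] using hS
  rw [hπ.eq_sInf S hSne, inf'_eq_csInf_image]
  congr 1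
  ext x
  simp [eq_comm]

lemma monotone (hπ : IsComplMin p π) (hp : ∀ i, 0 ≤ p i) : Monotone π := by
  intro S T hST
  rcases (Tᶜ).eq_empty_or_nonempty with hT | hT
  · rw [(compl_eq_empty_iff T).mp hT, hπ.univ_eq]
    rcases (Sᶜ).eq_empty_or_nonempty with hS | ⟨i, hi⟩
    · rw [(compl_eq_empty_iff S).mp hS, hπ.univ_eq]
    · rw [hπ.eq_inf' ⟨i, hi⟩]
      exact (inf'_le _ hi).trans (by linarith [hp i])
  · rw [hπ.eq_inf' hT, hπ.eq_inf' (hT.mono (compl_subset_compl.mpr hST))]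
    exact inf'_mono _ (compl_subset_compl.mpr hST) hT

lemma erase_eq_min (hπ : IsComplMin p π) (hp : ∀ i, 0 ≤ p i) (S : Finset ι) (j : ι) :
    π (S.erase j) = min (π S) (1 - p j) := by
  rw [hπ.eq_inf' (by rw [compl_erase]; exact insert_nonempty _ _)]
  simp only [compl_erase]
  rcases (Sᶜ).eq_empty_or_nonempty with hS | hS
  · obtain rfl := (compl_eq_empty_iff S).mp hS
    simp only [compl_univ, insert_empty, inf'_singleton, hπ.univ_eq]
    exact (min_eq_right (by linarith [hp j])).symm
  · rw [inf'_insert (H := hS), hπ.eq_inf' hS, min_comm]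

end IsComplMin

lemma mul_min_add_mul_sub_min_le {w W W' a A c : ℝ} (hw : 0 ≤ w) (hW : 0 ≤ W) (hWW' : W ≤ W')
    (haA : a ≤ A) :
    w * min a c + W * (a - min a c) ≤ w * min A c + W' * (A - min A c) := by
  rcases le_total a c with hac | hca
  · rcases le_total A c with hAc | hcA
    · rw [min_eq_left hac, min_eq_left hAc]
      nlinarith
    · rw [min_eq_left hac, min_eq_right hcA]
      nlinarith [mul_nonneg hW (sub_nonneg.mpr hcA)]
  · rw [min_eq_right hca, min_eq_right (hca.trans haA)]
    nlinarith [mul_le_mul_of_nonneg_left (sub_le_sub_right haA c) hW]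

theorem stmt5_general {n : ℕ} (r ν p : Fin n → ℝ)
    (hr : ∀ i, 0 ≤ r i) (hν : ∀ i, 0 < ν i) (hp : ∀ i, 0 ≤ p i ∧ p i ≤ 1)
    (π : Finset (Fin n) → ℝ)
    (hπfull : π Finset.univ = 1)
    (hπdef : ∀ S : Finset (Fin n), S ≠ Finset.univ →
      π S = sInf {x : ℝ | ∃ i ∈ Sᶜ, x = 1 - p i})
    (g : Finset (Fin n) → Fin n → ℝ)
    (hg : ∀ S j, g S j =
      (ν j * r j * π (S.erase j) + ∑ i ∈ S, ν i * r i * (π S - π (S.erase j))) / ν j)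
    (Sstar : Finset (Fin n)) (j : Fin n) (lam : ℝ)
    (h : g Sstar j ≤ lam) :
    ∀ S ⊆ Sstar, j ∈ S → g S j ≤ lam := by
  intro S hS _
  have hπ : IsComplMin p π := ⟨hπfull, hπdef⟩
  have hp₀ : ∀ i, 0 ≤ p i := fun i => (hp i).1
  have hνr : ∀ i, 0 ≤ ν i * r i := fun i => mul_nonneg (hν i).le (hr i)
  refine le_trans ?_ h
  rw [hg, hg, div_le_div_iff_of_pos_right (hν j), ← sum_mul, ← sum_mul,
    hπ.erase_eq_min hp₀, hπ.erase_eq_min hp₀]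
  exact mul_min_add_mul_sub_min_le (hνr j) (sum_nonneg fun i _ => hνr i)
    (sum_le_sum_of_subset_of_nonneg hS fun i _ _ => hνr i) (hπ.monotone hp₀ hS)

/-- For ū = 1 with π(S) = min_{i∈S̄}(1 − p_i^0) and π(I\{0}) = 1, if
g(S*, j) ≤ λ for some j ∈ S*, then g(S, j) ≤ λ for every subassortment S ⊆ S*
containing j, where g(S,j) = [ν_j r_j π(S\{j}) + Σ_{i∈S} ν_i r_i (π(S) − π(S\{j}))]/ν_j. -/
theorem stmt5 {n : ℕ} (r ν p : Fin n → ℝ)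
    (hr : ∀ i, 0 ≤ r i) (hν : ∀ i, 0 < ν i) (hp : ∀ i, 0 ≤ p i ∧ p i ≤ 1)
    (π : Finset (Fin n) → ℝ)
    (hπfull : π Finset.univ = 1)
    (hπdef : ∀ S : Finset (Fin n), S ≠ Finset.univ →
      π S = sInf {x : ℝ | ∃ i ∈ Sᶜ, x = 1 - p i})
    (g : Finset (Fin n) → Fin n → ℝ)
    (hg : ∀ S j, g S j =
      (ν j * r j * π (S.erase j) + ∑ i ∈ S, ν i * r i * (π S - π (S.erase j))) / ν j)
    (Sstar : Finset (Fin n)) (j : Fin n) (hj : j ∈ Sstar) (lam : ℝ)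
    (h : g Sstar j ≤ lam) :
    ∀ S ⊆ Sstar, j ∈ S → g S j ≤ lam :=
  stmt5_general r ν p hr hν hp π hπfull hπdef g hg Sstar j lam h
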